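/- arXiv:2210.16106 — 3 statements merged into one kernel-verified Lean document; each statement's English description precedes it below -/
import Mathlib

section
/- Let R, S, c, cmin be real numbers with R < 0, S > 0, c ≥ cmin > 0 and S + c·R > 0. Then R·S/(R² + S²) ≥ −cmin/(cmin² + 1) if cmin ≥ 1, and R·S/(R² + S²) ≥ −1/2 if cmin < 1. -/
/-!
Clearing denominators, `-k/(k²+1) ≤ RS/(R²+S²)` is `0 ≤ (S + kR)(R + kS)`. For `k = cmin ≥ 1`
both factors are positive above the ray `S + cR = 0`: the first because `cmin ≤ c` and `R < 0`,
the second because `cmin ≥ 1` makes `S + R ≥ S + cmin R > 0`. The bound `-1/2` is `2|RS| ≤ R² + S²`.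
-/

theorem neg_half_le_mul_div_sq_add_sq (x y : ℝ) : -(1 / 2) ≤ x * y / (x ^ 2 + y ^ 2) := by
  rcases (add_nonneg (sq_nonneg x) (sq_nonneg y)).eq_or_lt with hzero | hpos
  · rw [← hzero, div_zero]
    norm_num
  · rw [le_div_iff₀ hpos]
    nlinarith [sq_nonneg (x + y)]

theorem neg_div_sq_add_one_le_mul_div_sq_add_sq {x y k : ℝ} (hxy : 0 < x ^ 2 + y ^ 2)
    (h : 0 ≤ (y + k * x) * (x + k * y)) : -(k / (k ^ 2 + 1)) ≤ x * y / (x ^ 2 + y ^ 2) := by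
  rw [← neg_div, div_le_div_iff₀ (by positivity) hxy]
  linear_combination h

theorem RS_term_lower_bound_general
    (R S c cmin : ℝ) (hR : R < 0)
    (hc : cmin ≤ c) (heps : 0 < S + c * R) :
    (1 ≤ cmin → -(cmin / (cmin ^ 2 + 1)) ≤ R * S / (R ^ 2 + S ^ 2)) ∧
    (cmin < 1 → -(1 / 2) ≤ R * S / (R ^ 2 + S ^ 2)) := by
  refine ⟨fun hcmin => ?_, fun _ => neg_half_le_mul_div_sq_add_sq R S⟩
  have hden : 0 < R ^ 2 + S ^ 2 := by nlinarith [sq_nonneg S]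
  have hfirst : 0 < S + cmin * R := by nlinarith [mul_le_mul_of_nonpos_right hc hR.le]
  have hS : 0 < S := by nlinarith
  have hsecond : 0 < R + cmin * S := by nlinarith
  exact neg_div_sq_add_one_le_mul_div_sq_add_sq hden (mul_pos hfirst hsecond).le

/-- auxiliary Lemma of the paper: for reals `R < 0`, `S > 0`,
`c ≥ cmin > 0` with `S + c·R > 0`, the term `R·S/(R²+S²)` is bounded below by
`−cmin/(cmin²+1)` if `cmin ≥ 1`, and by `−1/2` if `cmin < 1`. -/
theorem RS_term_lower_bound
    (R S c cmin : ℝ) (hR : R < 0) (hS : 0 < S)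
    (hc : cmin ≤ c) (hcmin : 0 < cmin) (heps : 0 < S + c * R) :
    (1 ≤ cmin → -(cmin / (cmin ^ 2 + 1)) ≤ R * S / (R ^ 2 + S ^ 2)) ∧
    (cmin < 1 → -(1 / 2) ≤ R * S / (R ^ 2 + S ^ 2)) :=
  RS_term_lower_bound_general R S c cmin hR hc heps
end

section
/- Suppose x follows the disturbed planar circular-field dynamics, and there exist constants 0 < dxmin ≤ dxmax with dxmin ≤ ‖ẋ(t)‖ ≤ dxmax for all t ≥ 0. Assume R(0) < 0, S(0) < 0, and that the disturbance bound satisfies zmax ≤ min( kcf·dxmin²/(‖x(0)‖·dxmax²), dxmin²/(2·‖x(0)‖), −dxmin·S(0)/(4·‖x(0)‖²) ). Then there exists τ > 0 such that R(τ) = 0 and for all t ∈ [0, τ]: ‖x(t)‖ ≥ −S(0)/(2·dxmax) (equivalently, the barrier V_B(t) = 1/‖x(t)‖² satisfies V_B(t) ≤ 4·dxmax²/S(0)²). -/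
/-!
Write `R = ⟪x, ẋ⟫`, `S = ⟪x × ẋ, b⟫` and `c = kcf / (‖x‖² ‖ẋ‖²)`. Since `b ⟂ x`, the dynamics give
`Ṙ = ‖ẋ‖² + c R S + ⟪x, z⟫` and `Ṡ = -c R² + ⟪x × z, b⟫`. While `R ≤ 0` the distance `‖x‖` does
not grow, so both disturbance terms are bounded by `M = ‖x(0)‖ zmax`; if moreover `S ≤ 0`, then
`Ṙ ≥ dxmin² / 2`, so `R` reaches `0` in finite time. While `R ≤ -h` with `h = dxmin ‖x(0)‖`,
the term `c R²` dominates the disturbance and `S` does not increase; `R` spends time at most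
`2 ‖x(0)‖ / dxmin` above `-h`, during which `S` grows by at most `-S(0) / 2`. A bootstrap on the
first time `S` would reach `0` therefore gives `S ≤ S(0) / 2` up to the first zero of `R`, and
`|S| ≤ ‖x‖ dxmax` turns this into the distance bound.
-/

open scoped RealInnerProductSpace

noncomputable def cross (a b : EuclideanSpace ℝ (Fin 3)) : EuclideanSpace ℝ (Fin 3) :=
  (EuclideanSpace.equiv (Fin 3) ℝ).symm
    ![a 1 * b 2 - a 2 * b 1, a 2 * b 0 - a 0 * b 2, a 0 * b 1 - a 1 * b 0]

open scoped Matrix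
open Set WithLp

local notation "ℝ³" => EuclideanSpace ℝ (Fin 3)

section CrossProduct

lemma cross_eq_crossProduct (u w : ℝ³) : cross u w = toLp 2 (ofLp u ⨯₃ ofLp w) := rfl

lemma inner_eq_dotProduct (u w : ℝ³) : ⟪u, w⟫ = ofLp u ⬝ᵥ ofLp w := by
  rw [EuclideanSpace.inner_eq_star_dotProduct, star_trivial, dotProduct_comm]

lemma cross_self_eq_zero (u : ℝ³) : cross u u = 0 := by
  simp [cross_eq_crossProduct]

lemma cross_add_right (u w w' : ℝ³) : cross u (w + w') = cross u w + cross u w' := by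
  simp [cross_eq_crossProduct]

lemma cross_smul_right (r : ℝ) (u w : ℝ³) : cross u (r • w) = r • cross u w := by
  simp [cross_eq_crossProduct]

lemma inner_cross_left (u w c : ℝ³) : ⟪cross u w, c⟫ = ⟪u, cross w c⟫ := by
  simp only [inner_eq_dotProduct, cross_eq_crossProduct]
  rw [dotProduct_comm, triple_product_permutation]

lemma cross_cross_right (u w c : ℝ³) : cross u (cross w c) = ⟪u, c⟫ • w - ⟪w, u⟫ • c := by
  simp only [inner_eq_dotProduct, cross_eq_crossProduct, cross_cross_eq_smul_sub_smul']
  rfl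

lemma inner_cross_cross_of_inner_eq_zero {b u : ℝ³} (hb : ‖b‖ = 1) (hbu : ⟪b, u⟫ = 0)
    (w : ℝ³) : ⟪cross u (cross w b), b⟫ = -⟪u, w⟫ := by
  rw [cross_cross_right, inner_sub_left, real_inner_smul_left, real_inner_smul_left,
    real_inner_comm b u, hbu, real_inner_self_eq_norm_sq, hb, real_inner_comm w u]
  ring

lemma inner_cross_cross (u w p q : ℝ³) :
    ⟪cross u w, cross p q⟫ = ⟪u, p⟫ * ⟪w, q⟫ - ⟪u, q⟫ * ⟪w, p⟫ := by
  simp only [inner_eq_dotProduct, cross_eq_crossProduct, cross_dot_cross]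

lemma norm_cross_le (u w : ℝ³) : ‖cross u w‖ ≤ ‖u‖ * ‖w‖ := by
  have lagrange := inner_cross_cross u w u w
  rw [real_inner_self_eq_norm_sq, real_inner_self_eq_norm_sq, real_inner_self_eq_norm_sq,
    real_inner_comm u w] at lagrange
  rw [← pow_le_pow_iff_left₀ (norm_nonneg _) (by positivity) two_ne_zero, mul_pow, lagrange]
  linarith [mul_self_nonneg ⟪u, w⟫]

lemma abs_inner_cross_le {b : ℝ³} (hb : ‖b‖ = 1) (u w : ℝ³) : |⟪cross u w, b⟫| ≤ ‖u‖ * ‖w‖ :=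
  (abs_real_inner_le_norm _ _).trans (by rw [hb, mul_one]; exact norm_cross_le u w)

noncomputable def crossBilin : ℝ³ →L[ℝ] ℝ³ →L[ℝ] ℝ³ :=
  LinearMap.toContinuousLinearMap
    (LinearMap.toContinuousLinearMap.toLinearMap ∘ₗ
      LinearMap.mk₂ ℝ cross (fun u u' w => by simp [cross_eq_crossProduct])
        (fun r u w => by simp [cross_eq_crossProduct]) cross_add_right
        (fun r u w => cross_smul_right r u w))

lemma HasDerivAt.cross {u w : ℝ → ℝ³} {u' w' : ℝ³} {t : ℝ} (hu : HasDerivAt u u' t)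
    (hw : HasDerivAt w w' t) :
    HasDerivAt (fun s => cross (u s) (w s)) (cross (u t) w' + cross u' (w t)) t :=
  crossBilin.hasDerivAt_of_bilinear (fun _ => hu) (fun _ => hw)

end CrossProduct

section Comparison

lemma sub_le_mul_sub_of_hasDerivAt_le {f f' : ℝ → ℝ} {a b C : ℝ} (hab : a ≤ b)
    (hf : ∀ t ∈ Icc a b, HasDerivAt f (f' t) t) (hf' : ∀ t ∈ Ioo a b, f' t ≤ C) :
    f b - f a ≤ C * (b - a) := by
  rcases hab.eq_or_lt with rfl | hab
  · simp
  obtain ⟨c, hc, hslope⟩ := exists_hasDerivAt_eq_slope f f' hab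
    (fun t ht => (hf t ht).continuousAt.continuousWithinAt)
    (fun t ht => hf t (Ioo_subset_Icc_self ht))
  rw [eq_div_iff (sub_pos.2 hab).ne'] at hslope
  rw [← hslope]
  exact mul_le_mul_of_nonneg_right (hf' c hc) (sub_pos.2 hab).le

lemma mul_sub_le_sub_of_le_hasDerivAt {f f' : ℝ → ℝ} {a b C : ℝ} (hab : a ≤ b)
    (hf : ∀ t ∈ Icc a b, HasDerivAt f (f' t) t) (hf' : ∀ t ∈ Ioo a b, C ≤ f' t) :
    C * (b - a) ≤ f b - f a := by
  have := sub_le_mul_sub_of_hasDerivAt_le (f := fun t => -f t) hab (fun t ht => (hf t ht).neg)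
    (fun t ht => neg_le_neg (hf' t ht))
  linarith

lemma exists_first_hitting {f : ℝ → ℝ} {a b c : ℝ} (hab : a ≤ b) (hf : ContinuousOn f (Icc a b))
    (ha : f a < c) (hb : c ≤ f b) : ∃ τ ∈ Ioc a b, f τ = c ∧ ∀ t ∈ Ico a τ, f t < c := by
  set E := Icc a b ∩ f ⁻¹' Ici c
  have hE : IsClosed E := hf.preimage_isClosed_of_isClosed isClosed_Icc isClosed_Ici
  have hEbdd : BddBelow E := ⟨a, fun t ht => ht.1.1⟩
  have hτ : sInf E ∈ E := hE.csInf_mem ⟨b, ⟨hab, le_rfl⟩, hb⟩ hEbdd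
  have hbefore : ∀ t ∈ Ico a (sInf E), f t < c := fun t ht => not_le.1 fun hct =>
    (csInf_le hEbdd ⟨⟨ht.1, ht.2.le.trans hτ.1.2⟩, hct⟩).not_gt ht.2
  have haτ : a < sInf E := hτ.1.1.lt_of_ne fun h => (h ▸ hτ.2 : c ≤ f a).not_gt ha
  obtain ⟨s, hs, hfs⟩ := intermediate_value_Icc haτ.le (hf.mono (Icc_subset_Icc_right hτ.1.2))
    ⟨ha.le, hτ.2⟩
  have hsτ : s = sInf E := le_antisymm hs.2 (not_lt.1 fun h => (hbefore s ⟨hs.1, h⟩).ne hfs)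
  exact ⟨sInf E, ⟨haτ, hτ.1.2⟩, hsτ ▸ hfs, hbefore⟩

variable {R S R' S' : ℝ → ℝ} {a b ρ M h : ℝ}

lemma le_of_rate_nonpos_below (hab : a ≤ b)
    (hR : ∀ t ∈ Icc a b, HasDerivAt R (R' t) t) (hS : ∀ t ∈ Icc a b, HasDerivAt S (S' t) t)
    (hR' : ∀ t ∈ Ioo a b, 0 ≤ R' t) (hS' : ∀ t ∈ Ioo a b, R t ≤ -h → S' t ≤ 0)
    (hRb : R b ≤ -h) : S b ≤ S a := by
  have hRle : ∀ t ∈ Ioo a b, R t ≤ R b := fun t ht => by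
    have := mul_sub_le_sub_of_le_hasDerivAt ht.2.le
      (fun s hs => hR s ⟨ht.1.le.trans hs.1, hs.2⟩) (fun s hs => hR' s ⟨ht.1.trans hs.1, hs.2⟩)
    linarith
  have := sub_le_mul_sub_of_hasDerivAt_le hab hS fun t ht => hS' t ht ((hRle t ht).trans hRb)
  linarith

lemma sub_le_div_mul_sub_of_rate_le (hab : a ≤ b) (hρ : 0 < ρ) (hM : 0 ≤ M)
    (hR : ∀ t ∈ Icc a b, HasDerivAt R (R' t) t) (hS : ∀ t ∈ Icc a b, HasDerivAt S (S' t) t)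
    (hR' : ∀ t ∈ Ioo a b, ρ ≤ R' t) (hS' : ∀ t ∈ Ioo a b, S' t ≤ M) :
    S b - S a ≤ M / ρ * (R b - R a) := by
  have := sub_le_mul_sub_of_hasDerivAt_le (f := fun t => S t - M / ρ * R t) (C := 0) hab
    (fun t ht => (hS t ht).sub ((hR t ht).const_mul _)) fun t ht => by
      have : M ≤ M / ρ * R' t := by
        calc M = M / ρ * ρ := (div_mul_cancel₀ M hρ.ne').symm
          _ ≤ M / ρ * R' t := by gcongr; exact hR' t ht
      linarith [hS' t ht]
  linarith

lemma le_add_of_rate_bounds (hab : a ≤ b) (hρ : 0 < ρ) (hM : 0 ≤ M)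
    (hR : ∀ t ∈ Icc a b, HasDerivAt R (R' t) t) (hS : ∀ t ∈ Icc a b, HasDerivAt S (S' t) t)
    (hR' : ∀ t ∈ Ioo a b, ρ ≤ R' t) (hS'M : ∀ t ∈ Ioo a b, S' t ≤ M)
    (hS'0 : ∀ t ∈ Ioo a b, R t ≤ -h → S' t ≤ 0) :
    S b ≤ S a + M / ρ * max (R b + h) 0 := by
  have hR'0 : ∀ t ∈ Ioo a b, 0 ≤ R' t := fun t ht => hρ.le.trans (hR' t ht)
  have hgain : 0 ≤ M / ρ * max (R b + h) 0 := by positivity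
  by_cases hRb : R b ≤ -h
  · linarith [le_of_rate_nonpos_below hab hR hS hR'0 hS'0 hRb]
  have hmax : R b + h ≤ max (R b + h) 0 := le_max_left _ _
  by_cases hRa : -h ≤ R a
  · have := sub_le_div_mul_sub_of_rate_le hab hρ hM hR hS hR' hS'M
    nlinarith [div_nonneg hM hρ.le]
  obtain ⟨t₁, ht₁, hRt₁⟩ := intermediate_value_Icc hab
    (fun t ht => (hR t ht).continuousAt.continuousWithinAt) ⟨(not_le.1 hRa).le, (not_le.1 hRb).le⟩
  have hIcc₁ : Icc a t₁ ⊆ Icc a b := Icc_subset_Icc_right ht₁.2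
  have hIoo₁ : Ioo a t₁ ⊆ Ioo a b := Ioo_subset_Ioo_right ht₁.2
  have hIcc₂ : Icc t₁ b ⊆ Icc a b := Icc_subset_Icc_left ht₁.1
  have hIoo₂ : Ioo t₁ b ⊆ Ioo a b := Ioo_subset_Ioo_left ht₁.1
  have h₁ := le_of_rate_nonpos_below ht₁.1 (fun t ht => hR t (hIcc₁ ht))
    (fun t ht => hS t (hIcc₁ ht)) (fun t ht => hR'0 t (hIoo₁ ht))
    (fun t ht => hS'0 t (hIoo₁ ht)) hRt₁.le
  have h₂ := sub_le_div_mul_sub_of_rate_le ht₁.2 hρ hM (fun t ht => hR t (hIcc₂ ht))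
    (fun t ht => hS t (hIcc₂ ht)) (fun t ht => hR' t (hIoo₂ ht))
    (fun t ht => hS'M t (hIoo₂ ht))
  rw [hRt₁] at h₂
  nlinarith [div_nonneg hM hρ.le]

lemma le_half_of_rate_bounds (hρ : 0 < ρ) (hM : 0 ≤ M) (hh : 0 ≤ h)
    (hR : ∀ t ∈ Icc a b, HasDerivAt R (R' t) t) (hS : ∀ t ∈ Icc a b, HasDerivAt S (S' t) t)
    (hRnonpos : ∀ t ∈ Icc a b, R t ≤ 0) (hR' : ∀ t ∈ Icc a b, S t ≤ 0 → ρ ≤ R' t)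
    (hS'M : ∀ t ∈ Icc a b, S' t ≤ M) (hS'0 : ∀ t ∈ Icc a b, R t ≤ -h → S' t ≤ 0)
    (hSa : S a < 0) (hMh : M * h ≤ ρ * (-S a / 2)) :
    ∀ t ∈ Icc a b, S t ≤ S a / 2 := by
  have key : ∀ t ∈ Icc a b, (∀ s ∈ Ico a t, S s ≤ 0) → S t ≤ S a / 2 := by
    intro t ht hS_nonpos
    have hsub : Icc a t ⊆ Icc a b := Icc_subset_Icc_right ht.2
    have hsub' : Ioo a t ⊆ Icc a b := Ioo_subset_Icc_self.trans hsub
    have hSt := le_add_of_rate_bounds ht.1 hρ hM (fun s hs => hR s (hsub hs))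
      (fun s hs => hS s (hsub hs))
      (fun s hs => hR' s (hsub' hs) (hS_nonpos s (Ioo_subset_Ico_self hs)))
      (fun s hs => hS'M s (hsub' hs)) (fun s hs => hS'0 s (hsub' hs))
    have : M / ρ * max (R t + h) 0 ≤ -S a / 2 := by
      calc M / ρ * max (R t + h) 0 ≤ M / ρ * h := by
            gcongr; exact max_le (by linarith [hRnonpos t ht]) hh
        _ ≤ -S a / 2 := by rw [div_mul_eq_mul_div, div_le_iff₀ hρ]; linarith
    linarith
  have hSneg : ∀ t ∈ Icc a b, S t < 0 := by
    intro t ht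
    by_contra! hSt
    obtain ⟨τ, hτ, hSτ, hbefore⟩ := exists_first_hitting ht.1
      (fun s hs => (hS s (Icc_subset_Icc_right ht.2 hs)).continuousAt.continuousWithinAt) hSa hSt
    have := key τ ⟨hτ.1.le, hτ.2.trans ht.2⟩ fun s hs => (hbefore s hs).le
    linarith
  exact fun t ht => key t ht fun s hs => (hSneg s ⟨hs.1, hs.2.le.trans ht.2⟩).le

end Comparison

section Dynamics

/-- `d/dt ⟪x, ẋ⟫` at position `p`, velocity `q` and disturbance `w`. -/
noncomputable def radialRate (kcf : ℝ) (b p q w : ℝ³) : ℝ :=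
  ‖q‖ ^ 2 + kcf / (‖p‖ ^ 2 * ‖q‖ ^ 2) * ⟪p, q⟫ * ⟪cross p q, b⟫ + ⟪p, w⟫

/-- `d/dt ⟪x × ẋ, b⟫` at position `p`, velocity `q` and disturbance `w`. -/
noncomputable def tangentialRate (kcf : ℝ) (b p q w : ℝ³) : ℝ :=
  -(kcf / (‖p‖ ^ 2 * ‖q‖ ^ 2) * ⟪p, q⟫ ^ 2) + ⟪cross p w, b⟫

variable {kcf : ℝ} {b : ℝ³} {x v a z : ℝ → ℝ³} {t : ℝ}

lemma hasDerivAt_inner_of_cf (hx : HasDerivAt x (v t) t) (hv : HasDerivAt v (a t) t)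
    (hacc : a t = (kcf / (‖x t‖ ^ 2 * ‖v t‖ ^ 2) * ⟪v t, x t⟫) • cross (v t) b + z t) :
    HasDerivAt (fun s => ⟪x s, v s⟫) (radialRate kcf b (x t) (v t) (z t)) t := by
  refine (hx.inner ℝ hv).congr_deriv ?_
  rw [radialRate, hacc, inner_add_right, real_inner_smul_right, inner_cross_left,
    real_inner_self_eq_norm_sq, real_inner_comm (x t) (v t)]
  ring

lemma hasDerivAt_inner_cross_of_cf (hx : HasDerivAt x (v t) t) (hv : HasDerivAt v (a t) t)
    (hacc : a t = (kcf / (‖x t‖ ^ 2 * ‖v t‖ ^ 2) * ⟪v t, x t⟫) • cross (v t) b + z t)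
    (hb : ‖b‖ = 1) (hbx : ⟪b, x t⟫ = 0) :
    HasDerivAt (fun s => ⟪cross (x s) (v s), b⟫) (tangentialRate kcf b (x t) (v t) (z t)) t := by
  refine ((hx.cross hv).inner ℝ (hasDerivAt_const t b)).congr_deriv ?_
  rw [tangentialRate, hacc, cross_self_eq_zero, add_zero, inner_zero_right, zero_add,
    cross_add_right, cross_smul_right, inner_add_left, real_inner_smul_left,
    inner_cross_cross_of_inner_eq_zero hb hbx, real_inner_comm (v t) (x t)]
  ring

end Dynamics

lemma norm_le_norm_of_inner_nonpos {E : Type*} [NormedAddCommGroup E] [InnerProductSpace ℝ E]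
    {x v : ℝ → E} {a b : ℝ} (hab : a ≤ b) (hx : ∀ t ∈ Icc a b, HasDerivAt x (v t) t)
    (hxv : ∀ t ∈ Ioo a b, ⟪x t, v t⟫ ≤ 0) : ‖x b‖ ≤ ‖x a‖ := by
  have := sub_le_mul_sub_of_hasDerivAt_le (C := 0) hab (fun t ht => (hx t ht).norm_sq)
    fun t ht => by linarith [hxv t ht]
  rw [← pow_le_pow_iff_left₀ (norm_nonneg _) (norm_nonneg _) two_ne_zero]
  linarith

section RateBounds

variable {kcf : ℝ} {b p q w : ℝ³}

lemma sq_norm_sub_mul_le_radialRate (hkcf : 0 ≤ kcf) (hR : ⟪p, q⟫ ≤ 0)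
    (hS : ⟪cross p q, b⟫ ≤ 0) :
    ‖q‖ ^ 2 - ‖p‖ * ‖w‖ ≤ radialRate kcf b p q w := by
  rw [radialRate]
  have : 0 ≤ kcf / (‖p‖ ^ 2 * ‖q‖ ^ 2) * ⟪p, q⟫ * ⟪cross p q, b⟫ := by
    rw [mul_assoc]; exact mul_nonneg (by positivity) (mul_nonneg_of_nonpos_of_nonpos hR hS)
  linarith [neg_le_of_abs_le (abs_real_inner_le_norm p w)]

lemma tangentialRate_le (hkcf : 0 ≤ kcf) (hb : ‖b‖ = 1) :
    tangentialRate kcf b p q w ≤ ‖p‖ * ‖w‖ := by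
  rw [tangentialRate]
  have : 0 ≤ kcf / (‖p‖ ^ 2 * ‖q‖ ^ 2) * ⟪p, q⟫ ^ 2 := by positivity
  linarith [le_of_abs_le (abs_inner_cross_le hb p w)]

lemma tangentialRate_nonpos {r V m h : ℝ} (hkcf : 0 ≤ kcf) (hb : ‖b‖ = 1) (hh : 0 < h)
    (hp : ‖p‖ ≤ r) (hq : ‖q‖ ≤ V) (hw : ‖w‖ ≤ m) (hR : ⟪p, q⟫ ≤ -h)
    (hbound : r * m * (r * V) ^ 2 ≤ kcf * h ^ 2) :
    tangentialRate kcf b p q w ≤ 0 := by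
  have hpq : h ≤ ‖p‖ * ‖q‖ := by linarith [neg_le_of_abs_le (abs_real_inner_le_norm p q)]
  have hpw : ‖p‖ * ‖w‖ ≤ r * m := mul_le_mul hp hw (norm_nonneg _) ((norm_nonneg _).trans hp)
  have hgain : r * m ≤ kcf / (‖p‖ ^ 2 * ‖q‖ ^ 2) * ⟪p, q⟫ ^ 2 := by
    rw [← mul_pow, div_mul_eq_mul_div, le_div_iff₀ (pow_pos (hh.trans_le hpq) 2)]
    calc r * m * (‖p‖ * ‖q‖) ^ 2 ≤ r * m * (r * V) ^ 2 := by
          refine mul_le_mul_of_nonneg_left (pow_le_pow_left₀ (by positivity) ?_ 2)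
            ((by positivity : (0:ℝ) ≤ ‖p‖ * ‖w‖).trans hpw)
          exact mul_le_mul hp hq (norm_nonneg _) ((norm_nonneg _).trans hp)
      _ ≤ kcf * h ^ 2 := hbound
      _ ≤ kcf * ⟪p, q⟫ ^ 2 := mul_le_mul_of_nonneg_left (by nlinarith) hkcf
  rw [tangentialRate]
  linarith [le_of_abs_le (abs_inner_cross_le hb p w)]

lemma neg_inner_cross_div_le_norm {V : ℝ} (hb : ‖b‖ = 1) (hV : 0 < V) (hq : ‖q‖ ≤ V) :
    -⟪cross p q, b⟫ / V ≤ ‖p‖ := by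
  rw [div_le_iff₀ hV]
  linarith [neg_le_of_abs_le (abs_inner_cross_le hb p q),
    mul_le_mul_of_nonneg_left hq (norm_nonneg p)]

end RateBounds

structure IsDisturbedCFMotion (kcf zmax dxmin dxmax : ℝ) (b : ℝ³) (x v a z : ℝ → ℝ³) :
    Prop where
  norm_axis : ‖b‖ = 1
  hasDerivAt_pos : ∀ t, 0 ≤ t → HasDerivAt x (v t) t
  hasDerivAt_vel : ∀ t, 0 ≤ t → HasDerivAt v (a t) t
  inner_axis_pos : ∀ t, 0 ≤ t → ⟪b, x t⟫ = 0
  norm_dist_le : ∀ t, 0 ≤ t → ‖z t‖ ≤ zmax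
  acc_eq : ∀ t, 0 ≤ t →
    a t = (kcf / (‖x t‖ ^ 2 * ‖v t‖ ^ 2) * ⟪v t, x t⟫) • cross (v t) b + z t
  speed_ge : ∀ t, 0 ≤ t → dxmin ≤ ‖v t‖
  speed_le : ∀ t, 0 ≤ t → ‖v t‖ ≤ dxmax

namespace IsDisturbedCFMotion

variable {kcf zmax dxmin dxmax : ℝ} {b : ℝ³} {x v a z : ℝ → ℝ³}

theorem approach_bounds (hcf : IsDisturbedCFMotion kcf zmax dxmin dxmax b x v a z) (hkcf : 0 ≤ kcf)
    (hzmax : 0 ≤ zmax) (hdxmin : 0 < dxmin) (hx0 : 0 < ‖x 0‖)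
    (hz₁ : zmax * (‖x 0‖ * dxmax ^ 2) ≤ kcf * dxmin ^ 2)
    (hz₂ : zmax * (2 * ‖x 0‖) ≤ dxmin ^ 2)
    (hz₃ : zmax * (4 * ‖x 0‖ ^ 2) ≤ -(dxmin * ⟪cross (x 0) (v 0), b⟫))
    (hS0 : ⟪cross (x 0) (v 0), b⟫ < 0) {T : ℝ} (hT : 0 ≤ T)
    (hR : ∀ t ∈ Icc 0 T, ⟪x t, v t⟫ ≤ 0) :
    (∀ t ∈ Icc 0 T, ⟪cross (x t) (v t), b⟫ ≤ ⟪cross (x 0) (v 0), b⟫ / 2) ∧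
      ⟪x 0, v 0⟫ + dxmin ^ 2 / 2 * T ≤ ⟪x T, v T⟫ := by
  have hx : ∀ t ∈ Icc 0 T, ‖x t‖ ≤ ‖x 0‖ := fun t ht =>
    norm_le_norm_of_inner_nonpos ht.1 (fun s hs => hcf.hasDerivAt_pos s hs.1)
      fun s hs => hR s ⟨hs.1.le, hs.2.le.trans ht.2⟩
  have hxz : ∀ t ∈ Icc 0 T, ‖x t‖ * ‖z t‖ ≤ ‖x 0‖ * zmax := fun t ht =>
    mul_le_mul (hx t ht) (hcf.norm_dist_le t ht.1) (norm_nonneg _) hx0.le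
  have hR' := fun t (ht : t ∈ Icc 0 T) => hasDerivAt_inner_of_cf (hcf.hasDerivAt_pos t ht.1)
    (hcf.hasDerivAt_vel t ht.1) (hcf.acc_eq t ht.1)
  have hS' := fun t (ht : t ∈ Icc 0 T) => hasDerivAt_inner_cross_of_cf
    (hcf.hasDerivAt_pos t ht.1) (hcf.hasDerivAt_vel t ht.1) (hcf.acc_eq t ht.1) hcf.norm_axis
    (hcf.inner_axis_pos t ht.1)
  have hRrate : ∀ t ∈ Icc 0 T, ⟪cross (x t) (v t), b⟫ ≤ 0 →
      dxmin ^ 2 / 2 ≤ radialRate kcf b (x t) (v t) (z t) := fun t ht hS => by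
      have := sq_norm_sub_mul_le_radialRate (w := z t) hkcf (hR t ht) hS
      have := pow_le_pow_left₀ hdxmin.le (hcf.speed_ge t ht.1) 2
      linarith [hxz t ht]
  have hSrate : ∀ t ∈ Icc 0 T, tangentialRate kcf b (x t) (v t) (z t) ≤ ‖x 0‖ * zmax :=
    fun t ht => (tangentialRate_le hkcf hcf.norm_axis).trans (hxz t ht)
  have hSrate_nonpos : ∀ t ∈ Icc 0 T, ⟪x t, v t⟫ ≤ -(dxmin * ‖x 0‖) →
      tangentialRate kcf b (x t) (v t) (z t) ≤ 0 :=
    fun t ht hRt => tangentialRate_nonpos hkcf hcf.norm_axis (by positivity) (hx t ht)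
      (hcf.speed_le t ht.1) (hcf.norm_dist_le t ht.1) hRt (by nlinarith [sq_nonneg ‖x 0‖])
  have hS := le_half_of_rate_bounds (by positivity) (by positivity) (by positivity) hR' hS' hR
    hRrate hSrate hSrate_nonpos hS0 (by nlinarith)
  refine ⟨hS, ?_⟩
  have := mul_sub_le_sub_of_le_hasDerivAt hT hR' fun t ht =>
    hRrate t (Ioo_subset_Icc_self ht) ((hS t (Ioo_subset_Icc_self ht)).trans (by linarith))
  linarith

end IsDisturbedCFMotion

theorem cf_disturbed_S_neg_general
    (kcf zmax dxmin dxmax : ℝ) (hkcf : 0 < kcf) (hzmax : 0 ≤ zmax)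
    (hdxmin : 0 < dxmin) (hdx : dxmin ≤ dxmax)
    (b : EuclideanSpace ℝ (Fin 3)) (hb : ‖b‖ = 1)
    (x v a z : ℝ → EuclideanSpace ℝ (Fin 3))
    (hx : ∀ t, 0 ≤ t → HasDerivAt x (v t) t)
    (hv : ∀ t, 0 ≤ t → HasDerivAt v (a t) t)
    (hbx : ∀ t, 0 ≤ t → ⟪b, x t⟫ = 0)
    (hz : ∀ t, 0 ≤ t → ‖z t‖ ≤ zmax)
    (hacc : ∀ t, 0 ≤ t →
      a t = (kcf / (‖x t‖ ^ 2 * ‖v t‖ ^ 2) * ⟪v t, x t⟫) • cross (v t) b + z t)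
    (hvmin : ∀ t, 0 ≤ t → dxmin ≤ ‖v t‖)
    (hvmax : ∀ t, 0 ≤ t → ‖v t‖ ≤ dxmax)
    (hR0 : ⟪x 0, v 0⟫ < 0)
    (hS0 : ⟪cross (x 0) (v 0), b⟫ < 0)
    (hzbound : zmax ≤ min (kcf * dxmin ^ 2 / (‖x 0‖ * dxmax ^ 2))
      (min (dxmin ^ 2 / (2 * ‖x 0‖))
        (-(dxmin * ⟪cross (x 0) (v 0), b⟫) / (4 * ‖x 0‖ ^ 2)))) :
    ∃ τ : ℝ, 0 < τ ∧ ⟪x τ, v τ⟫ = 0 ∧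
      ∀ t ∈ Set.Icc (0 : ℝ) τ, -⟪cross (x 0) (v 0), b⟫ / (2 * dxmax) ≤ ‖x t‖ := by
  have hcf : IsDisturbedCFMotion kcf zmax dxmin dxmax b x v a z :=
    ⟨hb, hx, hv, hbx, hz, hacc, hvmin, hvmax⟩
  have hx0 : 0 < ‖x 0‖ := norm_pos_iff.2 fun h0 => by simp [h0] at hR0
  have hdxmax : 0 < dxmax := hdxmin.trans_le hdx
  simp only [le_min_iff] at hzbound
  obtain ⟨hz₁, hz₂, hz₃⟩ := hzbound
  have approach := fun T => hcf.approach_bounds hkcf.le hzmax hdxmin hx0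
    ((le_div_iff₀ (by positivity)).1 hz₁) ((le_div_iff₀ (by positivity)).1 hz₂)
    ((le_div_iff₀ (by positivity)).1 hz₃) hS0 (T := T)
  obtain ⟨T₀, hT₀⟩ := exists_gt (-⟪x 0, v 0⟫ / (dxmin ^ 2 / 2))
  have hT₀pos : 0 < T₀ := (div_pos (neg_pos.2 hR0) (by positivity)).trans hT₀
  rw [div_lt_iff₀' (by positivity)] at hT₀
  obtain ⟨t₀, ht₀, hRt₀⟩ : ∃ t ∈ Icc 0 T₀, 0 ≤ ⟪x t, v t⟫ := by
    by_contra! hneg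
    have := (approach T₀ hT₀pos.le fun t ht => (hneg t ht).le).2
    linarith [hneg T₀ ⟨hT₀pos.le, le_rfl⟩]
  obtain ⟨τ, hτ, hRτ, hbefore⟩ := exists_first_hitting ht₀.1
    (fun t ht => ((hx t ht.1).inner ℝ (hv t ht.1)).continuousAt.continuousWithinAt) hR0 hRt₀
  have hS := (approach τ hτ.1.le fun t ht =>
    ht.2.lt_or_eq.elim (fun h => (hbefore t ⟨ht.1, h⟩).le) fun h => h ▸ hRτ.le).1
  refine ⟨τ, hτ.1, hRτ, fun t ht => ?_⟩
  calc -⟪cross (x 0) (v 0), b⟫ / (2 * dxmax) ≤ -⟪cross (x t) (v t), b⟫ / dxmax := by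
        rw [← div_div]; gcongr; linarith [hS t ht]
    _ ≤ ‖x t‖ := neg_inner_cross_div_le_norm hb hdxmax (hvmax t ht.1)

/-- Lemma 6 of the paper: under the disturbed planar circular-field
dynamics with speed bounds `dxmin ≤ ‖ẋ(t)‖ ≤ dxmax`, if `R(0) < 0`, `S(0) < 0` and the
disturbance bound satisfies
`zmax ≤ min(kcf·dxmin²/(‖x(0)‖·dxmax²), dxmin²/(2‖x(0)‖), −dxmin·S(0)/(4‖x(0)‖²))`,
then there is `τ > 0` with `R(τ) = 0` and `‖x(t)‖ ≥ −S(0)/(2·dxmax)` on `[0, τ]`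
(equivalently `V_B(t) ≤ 4·dxmax²/S(0)²`). -/
theorem cf_disturbed_S_neg
    (kcf zmax dxmin dxmax : ℝ) (hkcf : 0 < kcf) (hzmax : 0 ≤ zmax)
    (hdxmin : 0 < dxmin) (hdx : dxmin ≤ dxmax)
    (b : EuclideanSpace ℝ (Fin 3)) (hb : ‖b‖ = 1)
    (x v a z : ℝ → EuclideanSpace ℝ (Fin 3))
    (hx : ∀ t, 0 ≤ t → HasDerivAt x (v t) t)
    (hv : ∀ t, 0 ≤ t → HasDerivAt v (a t) t)
    (hxne : ∀ t, 0 ≤ t → x t ≠ 0)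
    (hvne : ∀ t, 0 ≤ t → v t ≠ 0)
    (hbx : ∀ t, 0 ≤ t → ⟪b, x t⟫ = 0)
    (hbv : ∀ t, 0 ≤ t → ⟪b, v t⟫ = 0)
    (hbz : ∀ t, 0 ≤ t → ⟪b, z t⟫ = 0)
    (hz : ∀ t, 0 ≤ t → ‖z t‖ ≤ zmax)
    (hacc : ∀ t, 0 ≤ t →
      a t = (kcf / (‖x t‖ ^ 2 * ‖v t‖ ^ 2) * ⟪v t, x t⟫) • cross (v t) b + z t)
    (hvmin : ∀ t, 0 ≤ t → dxmin ≤ ‖v t‖)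
    (hvmax : ∀ t, 0 ≤ t → ‖v t‖ ≤ dxmax)
    (hR0 : ⟪x 0, v 0⟫ < 0)
    (hS0 : ⟪cross (x 0) (v 0), b⟫ < 0)
    (hzbound : zmax ≤ min (kcf * dxmin ^ 2 / (‖x 0‖ * dxmax ^ 2))
      (min (dxmin ^ 2 / (2 * ‖x 0‖))
        (-(dxmin * ⟪cross (x 0) (v 0), b⟫) / (4 * ‖x 0‖ ^ 2)))) :
    ∃ τ : ℝ, 0 < τ ∧ ⟪x τ, v τ⟫ = 0 ∧
      ∀ t ∈ Set.Icc (0 : ℝ) τ, -⟪cross (x 0) (v 0), b⟫ / (2 * dxmax) ≤ ‖x t‖ :=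
  cf_disturbed_S_neg_general kcf zmax dxmin dxmax hkcf hzmax hdxmin hdx b hb x v a z hx hv hbx hz
    hacc hvmin hvmax hR0 hS0 hzbound
end

section
/- Let F : ℝ³ × ℝ³ → ℝ³ be locally Lipschitz with F(p, w)·w = 0 for all p, w ∈ ℝ³ and F(p, 0) = 0 for all p ∈ ℝ³. Let x : [0,∞) → ℝ³ be twice differentiable and satisfy ẍ(t) = F(x(t), ẋ(t)) − ∇U(x(t)) − kv·ẋ(t) for all t ≥ 0. Then the equilibrium (xg, 0) is attractive: x(t) → xg and ẋ(t) → 0 as t → ∞. -/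
/-!
Since `F` does no work, the energy `E = U(x) + ‖ẋ‖² / 2` has derivative `-kv ‖ẋ‖²`: it decreases
to a limit `L`, and the trajectory stays in a compact set because `U` grows linearly. So the
acceleration is bounded, and the dissipated power `kv ‖ẋ‖²`, which has finite integral and bounded
derivative, tends to `0` by Barbalat's lemma. Hence `ẋ → 0`, `F(x, ẋ) → 0` and `U(x) → L`.
Finally the virial `⟪ẋ, x - xg⟫` is bounded, while its derivative is at most
`o(1) - ⟪∇U(x), x - xg⟫ ≤ o(1) - U(x) → -L`; so `L = 0`, which forces `x → xg`.
-/

open scoped RealInnerProductSpace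
open Classical Filter

/-- The gradient of the Huber potential `U` centred at the goal `xg`. -/
noncomputable def gradHuberU (kp kv dxmax : ℝ) (xg p : EuclideanSpace ℝ (Fin 3)) :
    EuclideanSpace ℝ (Fin 3) :=
  if ‖p - xg‖ < kv * dxmax / kp then kp • (p - xg)
  else (kv * dxmax / ‖p - xg‖) • (p - xg)

open Topology InnerProductSpace

local notation "ℝ³" => EuclideanSpace ℝ (Fin 3)

theorem tendsto_apply_prod_of_isCompact {α X Y Z : Type*} [TopologicalSpace X]
    [TopologicalSpace Y] [TopologicalSpace Z] {l : Filter α} {F : X × Y → Z} (hF : Continuous F)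
    {K : Set X} (hK : IsCompact K) {y₀ : Y} {z₀ : Z} (hFK : ∀ p ∈ K, F (p, y₀) = z₀)
    {p : α → X} {w : α → Y} (hp : ∀ᶠ s in l, p s ∈ K) (hw : Tendsto w l (𝓝 y₀)) :
    Tendsto (fun s => F (p s, w s)) l (𝓝 z₀) := by
  have hpw : Tendsto (fun s => (p s, w s)) l (𝓝ˢ (K ×ˢ {y₀})) := by
    rw [hK.nhdsSet_prod_eq isCompact_singleton, nhdsSet_singleton]
    exact ((tendsto_principal.2 hp).mono_right principal_le_nhdsSet).prodMk hw
  rw [← nhdsSet_singleton]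
  exact (hF.tendsto_nhdsSet fun q hq => by
    obtain ⟨hq₁, hq₂⟩ := Set.mem_prod.1 hq
    rw [Set.mem_singleton_iff] at hq₂ ⊢
    rw [← hFK q.1 hq₁, ← hq₂]).comp hpw

theorem tendsto_atBot_of_hasDerivAt_le_neg {W w : ℝ → ℝ} {c : ℝ} (hc : 0 < c)
    (h : ∀ᶠ t in atTop, HasDerivAt W (w t) t ∧ w t ≤ -c) : Tendsto W atTop atBot := by
  obtain ⟨T, hT⟩ := eventually_atTop.1 h
  have hdecay : ∀ t, T ≤ t → W t ≤ -c * t + (W T + c * T) := by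
    intro t ht
    have := (convex_Ici T).image_sub_le_mul_sub_of_deriv_le
      (fun s hs => (hT s hs).1.continuousAt.continuousWithinAt)
      (fun s hs => (hT s (interior_subset hs)).1.differentiableAt.differentiableWithinAt)
      (fun s hs => (hT s (interior_subset hs)).1.deriv ▸ (hT s (interior_subset hs)).2)
      T (Set.mem_Ici.2 le_rfl) t ht ht
    linarith
  refine tendsto_atBot_mono' _ (eventually_atTop.2 ⟨T, hdecay⟩) ?_
  exact tendsto_atBot_add_const_right _ _ (tendsto_id.const_mul_atTop_of_neg (neg_neg_of_pos hc))

theorem mul_abs_le_abs_intervalIntegral_add {f f' : ℝ → ℝ} {t d M : ℝ} (hd : 0 ≤ d)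
    (hf : ∀ s ∈ Set.Icc t (t + d), HasDerivAt f (f' s) s)
    (hf' : ∀ s ∈ Set.Icc t (t + d), |f' s| ≤ M) :
    d * |f t| ≤ |∫ s in t..t + d, f s| + M * d ^ 2 := by
  have htd : t ≤ t + d := by linarith
  have ht : t ∈ Set.Icc t (t + d) := ⟨le_rfl, htd⟩
  have hM : 0 ≤ M := (abs_nonneg _).trans (hf' t ht)
  have hlip : ∀ s ∈ Set.Icc t (t + d), |f s - f t| ≤ M * d := fun s hs =>
    (norm_image_sub_le_of_norm_deriv_le_segment' (fun u hu => (hf u hu).hasDerivWithinAt)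
      (fun u hu => hf' u (Set.Ico_subset_Icc_self hu)) s hs).trans (by nlinarith [hs.2])
  have hint : IntervalIntegrable f MeasureTheory.volume t (t + d) :=
    ContinuousOn.intervalIntegrable fun s hs =>
      (hf s (Set.uIcc_of_le htd ▸ hs)).continuousAt.continuousWithinAt
  have hdev : ‖∫ s in t..t + d, (f s - f t)‖ ≤ M * d * |t + d - t| := by
    refine intervalIntegral.norm_integral_le_of_norm_le_const fun s hs => ?_
    rw [Set.uIoc_of_le htd] at hs
    exact hlip s (Set.Ioc_subset_Icc_self hs)
  rw [intervalIntegral.integral_sub hint intervalIntegrable_const, intervalIntegral.integral_const,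
    smul_eq_mul, add_sub_cancel_left, abs_of_nonneg hd, Real.norm_eq_abs] at hdev
  have := abs_sub_abs_le_abs_sub (d * f t) (∫ s in t..t + d, f s)
  rw [abs_mul, abs_of_nonneg hd, abs_sub_comm] at this
  nlinarith

/-- Barbalat's lemma. -/
theorem tendsto_zero_of_tendsto_intervalIntegral {f f' : ℝ → ℝ} {M I : ℝ}
    (hf : ∀ t, 0 ≤ t → HasDerivAt f (f' t) t) (hf' : ∀ t, 0 ≤ t → |f' t| ≤ M)
    (hI : Tendsto (fun T => ∫ s in (0 : ℝ)..T, f s) atTop (𝓝 I)) :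
    Tendsto f atTop (𝓝 0) := by
  have hint : ∀ b, 0 ≤ b → IntervalIntegrable f MeasureTheory.volume 0 b :=
    fun b hb => ContinuousOn.intervalIntegrable fun s hs =>
      (hf s (Set.uIcc_of_le hb ▸ hs).1).continuousAt.continuousWithinAt
  have hM : 0 ≤ M := (abs_nonneg _).trans (hf' 0 le_rfl)
  rw [Metric.tendsto_nhds]
  intro ε hε
  set d := ε / (4 * (M + 1))
  have hd : 0 < d := by positivity
  have hMd : M * d ≤ ε / 4 := by
    rw [mul_div_assoc', div_le_div_iff₀ (by positivity) (by norm_num)]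
    nlinarith
  have hslice : Tendsto (fun t => ∫ s in t..t + d, f s) atTop (𝓝 0) := by
    have := (hI.comp (tendsto_atTop_add_const_right _ d tendsto_id)).sub hI
    rw [sub_self] at this
    refine this.congr' ?_
    filter_upwards [eventually_ge_atTop 0] with t ht
    exact intervalIntegral.integral_interval_sub_left (hint (t + d) (by linarith)) (hint t ht)
  filter_upwards [eventually_ge_atTop 0, Metric.tendsto_nhds.1 hslice (d * ε / 2) (by positivity)]
    with t ht hsmall
  rw [Real.dist_eq, sub_zero] at hsmall ⊢
  have := mul_abs_le_abs_intervalIntegral_add hd.le (fun s hs => hf s (ht.trans hs.1))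
    (fun s hs => hf' s (ht.trans hs.1))
  have : d * |f t| < d * ε := by nlinarith
  exact lt_of_mul_lt_mul_left this hd.le

noncomputable def HuberU (kp kv dxmax : ℝ) (xg p : ℝ³) : ℝ :=
  if ‖p - xg‖ < kv * dxmax / kp then kp / 2 * ‖p - xg‖ ^ 2
  else kv * dxmax * ‖p - xg‖ - kv ^ 2 * dxmax ^ 2 / (2 * kp)

section Huber

variable {kp kv dxmax : ℝ} {xg p : ℝ³}

theorem huberU_of_norm_le (hkp : kp ≠ 0) (hp : ‖p - xg‖ ≤ kv * dxmax / kp) :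
    HuberU kp kv dxmax xg p = kp / 2 * ‖p - xg‖ ^ 2 := by
  rcases hp.lt_or_eq with hlt | heq
  · exact if_pos hlt
  · rw [HuberU, if_neg heq.not_lt, heq]
    field_simp
    ring

theorem huberU_of_le_norm (hp : kv * dxmax / kp ≤ ‖p - xg‖) :
    HuberU kp kv dxmax xg p = kv * dxmax * ‖p - xg‖ - kv ^ 2 * dxmax ^ 2 / (2 * kp) :=
  if_neg hp.not_gt

theorem gradHuberU_of_norm_le (hkvd : kv * dxmax ≠ 0)
    (hp : ‖p - xg‖ ≤ kv * dxmax / kp) :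
    gradHuberU kp kv dxmax xg p = kp • (p - xg) := by
  rcases hp.lt_or_eq with hlt | heq
  · exact if_pos hlt
  · rw [gradHuberU, if_neg heq.not_lt, heq, div_div_cancel₀ hkvd]

theorem gradHuberU_of_le_norm (hp : kv * dxmax / kp ≤ ‖p - xg‖) :
    gradHuberU kp kv dxmax xg p = (kv * dxmax / ‖p - xg‖) • (p - xg) :=
  if_neg hp.not_gt

theorem hasFDerivAt_mul_norm_sub_sq {E : Type*} [NormedAddCommGroup E] [InnerProductSpace ℝ E]
    [CompleteSpace E] (c : ℝ) (y p : E) :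
    HasFDerivAt (fun q : E => c / 2 * ‖q - y‖ ^ 2) (toDual ℝ E (c • (p - y))) p := by
  refine (((hasFDerivAt_id p).sub_const y).norm_sq.const_mul (c / 2)).congr_fderiv ?_
  ext q
  simp [toDual_apply_apply]
  ring

theorem hasFDerivAt_norm_sub {E : Type*} [NormedAddCommGroup E] [InnerProductSpace ℝ E]
    [CompleteSpace E] {y p : E} (hp : p ≠ y) :
    HasFDerivAt (fun q : E => ‖q - y‖) (toDual ℝ E (‖p - y‖⁻¹ • (p - y))) p := by
  have hsq : ‖p - y‖ ^ 2 ≠ 0 := by simpa [sub_eq_zero] using hp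
  have h := ((hasFDerivAt_id p).sub_const y).norm_sq.sqrt hsq
  simp only [Real.sqrt_sq (norm_nonneg _)] at h
  refine h.congr_fderiv ?_
  ext q
  simp [toDual_apply_apply]
  ring

theorem hasGradientAt_huberU (hkp : 0 < kp) (hK : 0 < kv * dxmax) (p : ℝ³) :
    HasGradientAt (HuberU kp kv dxmax xg) (gradHuberU kp kv dxmax xg p) p := by
  set R := kv * dxmax / kp
  have hR : 0 < R := by positivity
  have hinner : ∀ q ∈ Metric.closedBall xg R, HasFDerivWithinAt (HuberU kp kv dxmax xg)
      (toDual ℝ ℝ³ (gradHuberU kp kv dxmax xg q)) (Metric.closedBall xg R) q := by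
    intro q hq
    rw [mem_closedBall_iff_norm] at hq
    rw [gradHuberU_of_norm_le hK.ne' hq]
    exact (hasFDerivAt_mul_norm_sub_sq kp xg q).hasFDerivWithinAt.congr
      (fun y hy => huberU_of_norm_le hkp.ne' (mem_closedBall_iff_norm.1 hy))
      (huberU_of_norm_le hkp.ne' hq)
  have houter : ∀ q ∈ {q : ℝ³ | R ≤ ‖q - xg‖}, HasFDerivWithinAt (HuberU kp kv dxmax xg)
      (toDual ℝ ℝ³ (gradHuberU kp kv dxmax xg q)) {q | R ≤ ‖q - xg‖} q := by
    intro q hq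
    have hq0 : q ≠ xg := by
      rintro rfl
      simp only [Set.mem_ofPred_eq, sub_self, norm_zero] at hq
      linarith
    rw [gradHuberU_of_le_norm hq]
    refine ((((hasFDerivAt_norm_sub hq0).const_mul (kv * dxmax)).sub_const
      (kv ^ 2 * dxmax ^ 2 / (2 * kp))).congr_fderiv ?_).hasFDerivWithinAt.congr
      (fun y hy => huberU_of_le_norm hy) (huberU_of_le_norm hq)
    ext y
    simp [toDual_apply_apply]
    ring
  rw [hasGradientAt_iff_hasFDerivAt]
  rcases lt_trichotomy ‖p - xg‖ R with hlt | heq | hgt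
  · exact (hinner p (mem_closedBall_iff_norm.2 hlt.le)).hasFDerivAt
      (Metric.closedBall_mem_nhds_of_mem (mem_ball_iff_norm.2 hlt))
  · have hcover : Metric.closedBall xg R ∪ {q | R ≤ ‖q - xg‖} = Set.univ := by
      ext q
      simp [dist_eq_norm, le_total]
    have h := (hinner p (mem_closedBall_iff_norm.2 heq.le)).union (houter p heq.ge)
    rwa [hcover, hasFDerivWithinAt_univ] at h
  · have hopen : IsOpen {q : ℝ³ | R < ‖q - xg‖} := isOpen_lt continuous_const (by fun_prop)
    exact (houter p hgt.le).hasFDerivAt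
      (Filter.mem_of_superset (hopen.mem_nhds hgt) fun q (hq : R < ‖q - xg‖) => hq.le)

theorem sq_min_le_huberU (hkp : 0 < kp) (hK : 0 ≤ kv * dxmax) :
    kp / 2 * min ‖p - xg‖ (kv * dxmax / kp) ^ 2 ≤ HuberU kp kv dxmax xg p := by
  rcases le_total ‖p - xg‖ (kv * dxmax / kp) with hp | hp
  · rw [min_eq_left hp, huberU_of_norm_le hkp.ne' hp]
  · rw [min_eq_right hp, huberU_of_le_norm hp]
    have hgap : kv * dxmax * ‖p - xg‖ - kv ^ 2 * dxmax ^ 2 / (2 * kp)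
        - kp / 2 * (kv * dxmax / kp) ^ 2 = kv * dxmax * (‖p - xg‖ - kv * dxmax / kp) := by
      field_simp
      ring
    nlinarith [mul_nonneg hK (sub_nonneg.2 hp)]

theorem huberU_nonneg (hkp : 0 < kp) (hK : 0 ≤ kv * dxmax) : 0 ≤ HuberU kp kv dxmax xg p :=
  (by positivity : (0 : ℝ) ≤ kp / 2 * _ ^ 2).trans (sq_min_le_huberU hkp hK)

theorem linear_le_huberU (hkp : 0 < kp) :
    kv * dxmax * ‖p - xg‖ - kv ^ 2 * dxmax ^ 2 / (2 * kp) ≤ HuberU kp kv dxmax xg p := by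
  rcases le_total ‖p - xg‖ (kv * dxmax / kp) with hp | hp
  · rw [huberU_of_norm_le hkp.ne' hp]
    have h : kp / 2 * ‖p - xg‖ ^ 2 - (kv * dxmax * ‖p - xg‖ - kv ^ 2 * dxmax ^ 2 / (2 * kp))
        = (kp * ‖p - xg‖ - kv * dxmax) ^ 2 / (2 * kp) := by
      field_simp
      ring
    nlinarith [show 0 ≤ (kp * ‖p - xg‖ - kv * dxmax) ^ 2 / (2 * kp) by positivity]
  · rw [huberU_of_le_norm hp]

theorem huberU_le_inner_gradHuberU (hkp : 0 < kp) :
    HuberU kp kv dxmax xg p ≤ ⟪gradHuberU kp kv dxmax xg p, p - xg⟫ := by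
  unfold HuberU gradHuberU
  split_ifs
  · rw [real_inner_smul_left, real_inner_self_eq_norm_sq]
    nlinarith [sq_nonneg ‖p - xg‖]
  · have hr : kv * dxmax / ‖p - xg‖ * ‖p - xg‖ ^ 2 = kv * dxmax * ‖p - xg‖ := by
      rcases eq_or_ne ‖p - xg‖ 0 with h | h
      · simp [h]
      · field_simp
    rw [real_inner_smul_left, real_inner_self_eq_norm_sq, hr]
    linarith [show 0 ≤ kv ^ 2 * dxmax ^ 2 / (2 * kp) by positivity]

theorem norm_gradHuberU_le (hkp : 0 < kp) (hK : 0 ≤ kv * dxmax) :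
    ‖gradHuberU kp kv dxmax xg p‖ ≤ kv * dxmax := by
  unfold gradHuberU
  split_ifs with hp
  · rw [norm_smul, Real.norm_of_nonneg hkp.le]
    calc kp * ‖p - xg‖ ≤ kp * (kv * dxmax / kp) := by gcongr
      _ = kv * dxmax := by field_simp
  · rw [norm_smul, Real.norm_of_nonneg (by positivity), div_mul_eq_mul_div]
    exact div_le_of_le_mul₀ (norm_nonneg _) hK le_rfl

theorem tendsto_of_tendsto_huberU {α : Type*} {l : Filter α} {y : α → ℝ³} (hkp : 0 < kp)
    (hK : 0 < kv * dxmax) (hy : Tendsto (fun s => HuberU kp kv dxmax xg (y s)) l (𝓝 0)) :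
    Tendsto y l (𝓝 xg) := by
  rw [Metric.tendsto_nhds]
  intro ε hε
  set δ := min ε (kv * dxmax / kp)
  have hδ : 0 < δ := lt_min hε (by positivity)
  filter_upwards [hy.eventually_lt_const (show 0 < kp / 2 * δ ^ 2 by positivity)] with s hs
  rw [dist_eq_norm]
  by_contra! hε'
  have hmin : δ ≤ min ‖y s - xg‖ (kv * dxmax / kp) := min_le_min_right _ hε'
  have := sq_min_le_huberU (xg := xg) (p := y s) hkp hK.le
  have : kp / 2 * δ ^ 2 ≤ kp / 2 * min ‖y s - xg‖ (kv * dxmax / kp) ^ 2 := by gcongr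
  linarith

end Huber

structure IsSteeringSolution (kp kv dxmax : ℝ) (xg : ℝ³) (F : ℝ³ × ℝ³ → ℝ³)
    (x v a : ℝ → ℝ³) : Prop where
  hasDerivAt_x : ∀ t, 0 ≤ t → HasDerivAt x (v t) t
  hasDerivAt_v : ∀ t, 0 ≤ t → HasDerivAt v (a t) t
  accel_eq : ∀ t, 0 ≤ t → a t = F (x t, v t) - gradHuberU kp kv dxmax xg (x t) - kv • v t

noncomputable def steeringEnergy (kp kv dxmax : ℝ) (xg : ℝ³) (x v : ℝ → ℝ³) (t : ℝ) : ℝ :=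
  HuberU kp kv dxmax xg (x t) + ‖v t‖ ^ 2 / 2

theorem steeringEnergy_nonneg {kp kv dxmax : ℝ} {xg : ℝ³} {x v : ℝ → ℝ³} (hkp : 0 < kp)
    (hK : 0 ≤ kv * dxmax) (t : ℝ) : 0 ≤ steeringEnergy kp kv dxmax xg x v t :=
  add_nonneg (huberU_nonneg hkp hK) (by positivity)

namespace IsSteeringSolution

variable {kp kv dxmax : ℝ} {xg : ℝ³} {F : ℝ³ × ℝ³ → ℝ³} {x v a : ℝ → ℝ³}

theorem hasDerivAt_steeringEnergy (hs : IsSteeringSolution kp kv dxmax xg F x v a)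
    (hkp : 0 < kp) (hK : 0 < kv * dxmax) (hFperp : ∀ p w, ⟪F (p, w), w⟫ = 0) {t : ℝ}
    (ht : 0 ≤ t) :
    HasDerivAt (steeringEnergy kp kv dxmax xg x v) (-(kv * ‖v t‖ ^ 2)) t := by
  have hU := (hasGradientAt_huberU (xg := xg) hkp hK (x t)).hasFDerivAt.comp_hasDerivAt t
    (hs.hasDerivAt_x t ht)
  have hkin := (hs.hasDerivAt_v t ht).norm_sq.div_const 2
  refine (hU.add hkin).congr_deriv ?_
  rw [toDual_apply_apply, hs.accel_eq t ht, inner_sub_right, inner_sub_right,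
    real_inner_smul_right, real_inner_comm (F (x t, v t)), hFperp,
    real_inner_comm (gradHuberU kp kv dxmax xg (x t)), real_inner_self_eq_norm_sq]
  ring

theorem antitoneOn_steeringEnergy (hs : IsSteeringSolution kp kv dxmax xg F x v a)
    (hkp : 0 < kp) (hkv : 0 < kv) (hK : 0 < kv * dxmax) (hFperp : ∀ p w, ⟪F (p, w), w⟫ = 0) :
    AntitoneOn (steeringEnergy kp kv dxmax xg x v) (Set.Ici 0) := by
  have hE := fun t (ht : t ∈ Set.Ici (0 : ℝ)) => hs.hasDerivAt_steeringEnergy hkp hK hFperp ht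
  refine antitoneOn_of_hasDerivWithinAt_nonpos (convex_Ici 0)
    (fun t ht => (hE t ht).continuousAt.continuousWithinAt)
    (fun t ht => (hE t (interior_subset ht)).hasDerivWithinAt) fun t _ => ?_
  have : 0 ≤ kv * ‖v t‖ ^ 2 := by positivity
  linarith

theorem tendsto_steeringEnergy (hs : IsSteeringSolution kp kv dxmax xg F x v a)
    (hkp : 0 < kp) (hkv : 0 < kv) (hK : 0 < kv * dxmax) (hFperp : ∀ p w, ⟪F (p, w), w⟫ = 0) :
    ∃ L, Tendsto (steeringEnergy kp kv dxmax xg x v) atTop (𝓝 L) := by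
  have hanti := hs.antitoneOn_steeringEnergy hkp hkv hK hFperp
  have hmono : Antitone fun t => steeringEnergy kp kv dxmax xg x v (max t 0) :=
    fun s t hst => hanti (Set.mem_Ici.2 (le_max_right _ _)) (Set.mem_Ici.2 (le_max_right _ _))
      (max_le_max hst le_rfl)
  refine ⟨_, (tendsto_atTop_ciInf hmono ⟨0, ?_⟩).congr' ?_⟩
  · rintro _ ⟨t, rfl⟩
    exact steeringEnergy_nonneg hkp hK.le _
  · filter_upwards [eventually_ge_atTop 0] with t ht
    rw [max_eq_left ht]

theorem exists_bound (hs : IsSteeringSolution kp kv dxmax xg F x v a)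
    (hkp : 0 < kp) (hkv : 0 < kv) (hK : 0 < kv * dxmax) (hFperp : ∀ p w, ⟪F (p, w), w⟫ = 0) :
    ∃ R, ∀ t, 0 ≤ t → ‖x t - xg‖ ≤ R ∧ ‖v t‖ ≤ R := by
  set E₀ := steeringEnergy kp kv dxmax xg x v 0
  refine ⟨max ((E₀ + kv ^ 2 * dxmax ^ 2 / (2 * kp)) / (kv * dxmax)) √(2 * E₀),
    fun t ht => ⟨le_max_of_le_left ?_, le_max_of_le_right ?_⟩⟩
  all_goals
    have hEt : steeringEnergy kp kv dxmax xg x v t ≤ E₀ :=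
      hs.antitoneOn_steeringEnergy hkp hkv hK hFperp (Set.mem_Ici.2 le_rfl) ht ht
    unfold steeringEnergy at hEt
  · rw [le_div_iff₀ hK]
    nlinarith [linear_le_huberU (kv := kv) (dxmax := dxmax) (xg := xg) (p := x t) hkp,
      sq_nonneg ‖v t‖]
  · apply Real.le_sqrt_of_sq_le
    nlinarith [huberU_nonneg (xg := xg) (p := x t) hkp hK.le]

theorem exists_bound_accel (hs : IsSteeringSolution kp kv dxmax xg F x v a)
    (hkp : 0 < kp) (hkv : 0 < kv) (hK : 0 < kv * dxmax) (hF : Continuous F) {R : ℝ}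
    (hR : ∀ t, 0 ≤ t → ‖x t - xg‖ ≤ R ∧ ‖v t‖ ≤ R) :
    ∃ M, ∀ t, 0 ≤ t → ‖a t‖ ≤ M := by
  obtain ⟨MF, hMF⟩ := ((isCompact_closedBall xg R).prod (isCompact_closedBall 0 R))
    |>.exists_bound_of_continuousOn hF.continuousOn
  refine ⟨MF + kv * dxmax + kv * R, fun t ht => ?_⟩
  have hFt := hMF (x t, v t) ⟨mem_closedBall_iff_norm.2 (hR t ht).1,
    mem_closedBall_zero_iff.2 (hR t ht).2⟩
  have hg := norm_gradHuberU_le (xg := xg) (p := x t) hkp hK.le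
  have hv : ‖kv • v t‖ ≤ kv * R := by
    rw [norm_smul, Real.norm_of_nonneg hkv.le]
    exact mul_le_mul_of_nonneg_left (hR t ht).2 hkv.le
  rw [hs.accel_eq t ht]
  linarith [norm_sub_le (F (x t, v t) - gradHuberU kp kv dxmax xg (x t)) (kv • v t),
    norm_sub_le (F (x t, v t)) (gradHuberU kp kv dxmax xg (x t))]

theorem tendsto_vel_zero (hs : IsSteeringSolution kp kv dxmax xg F x v a)
    (hkp : 0 < kp) (hkv : 0 < kv) (hK : 0 < kv * dxmax) (hFperp : ∀ p w, ⟪F (p, w), w⟫ = 0)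
    (hF : Continuous F) {L R : ℝ}
    (hE : Tendsto (steeringEnergy kp kv dxmax xg x v) atTop (𝓝 L))
    (hR : ∀ t, 0 ≤ t → ‖x t - xg‖ ≤ R ∧ ‖v t‖ ≤ R) :
    Tendsto v atTop (𝓝 0) := by
  set E := steeringEnergy kp kv dxmax xg x v
  obtain ⟨M, hM⟩ := hs.exists_bound_accel hkp hkv hK hF hR
  have hcont : ContinuousOn v (Set.Ici 0) := fun t ht =>
    (hs.hasDerivAt_v t ht).continuousAt.continuousWithinAt
  have hdiss : Tendsto (fun t => kv * ‖v t‖ ^ 2) atTop (𝓝 0) := by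
    refine tendsto_zero_of_tendsto_intervalIntegral (M := kv * (2 * (R * M)))
      (fun t ht => ((hs.hasDerivAt_v t ht).norm_sq).const_mul kv) (fun t ht => ?_)
      ((tendsto_const_nhds (x := E 0)).sub hE |>.congr' ?_)
    · rw [abs_mul, abs_mul, abs_of_pos hkv, abs_two]
      gcongr
      exact (abs_real_inner_le_norm _ _).trans
        (mul_le_mul (hR t ht).2 (hM t ht) (norm_nonneg _) ((norm_nonneg _).trans (hR t ht).2))
    · filter_upwards [eventually_ge_atTop 0] with T hT
      have hsub : Set.uIcc 0 T ⊆ Set.Ici 0 := by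
        rw [Set.uIcc_of_le hT]
        exact Set.Icc_subset_Ici_self
      have hint : IntervalIntegrable (fun t => -(kv * ‖v t‖ ^ 2)) MeasureTheory.volume 0 T :=
        ContinuousOn.intervalIntegrable (by have := hcont.mono hsub; fun_prop)
      have := intervalIntegral.integral_eq_sub_of_hasDerivAt
        (fun t ht => hs.hasDerivAt_steeringEnergy hkp hK hFperp (hsub ht)) hint
      rw [intervalIntegral.integral_neg] at this
      linarith
  have hv2 : Tendsto (fun t => ‖v t‖ ^ 2) atTop (𝓝 0) := by
    simpa [hkv.ne'] using hdiss.const_mul kv⁻¹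
  rw [tendsto_zero_iff_norm_tendsto_zero]
  simpa [Real.sqrt_sq (norm_nonneg _)] using hv2.sqrt

theorem eq_zero_of_tendsto_huberU (hs : IsSteeringSolution kp kv dxmax xg F x v a)
    (hkp : 0 < kp) (hkv : 0 < kv) (hK : 0 ≤ kv * dxmax) {L R : ℝ}
    (hR : ∀ t, 0 ≤ t → ‖x t - xg‖ ≤ R ∧ ‖v t‖ ≤ R) (hv : Tendsto v atTop (𝓝 0))
    (hF : Tendsto (fun t => F (x t, v t)) atTop (𝓝 0))
    (hU : Tendsto (fun t => HuberU kp kv dxmax xg (x t)) atTop (𝓝 L)) : L = 0 := by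
  refine le_antisymm (not_lt.1 fun hL => ?_) (ge_of_tendsto' hU fun t => huberU_nonneg hkp hK)
  set W := fun t => ⟪v t, x t - xg⟫
  have hW : ∀ t, 0 ≤ t → HasDerivAt W (⟪v t, v t⟫ + ⟪a t, x t - xg⟫) t := fun t ht =>
    (hs.hasDerivAt_v t ht).inner ℝ ((hs.hasDerivAt_x t ht).sub_const xg)
  have hW' : ∀ t, 0 ≤ t → ⟪v t, v t⟫ + ⟪a t, x t - xg⟫
      ≤ ‖v t‖ ^ 2 + ‖F (x t, v t)‖ * R + kv * (‖v t‖ * R) - HuberU kp kv dxmax xg (x t) := by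
    intro t ht
    rw [hs.accel_eq t ht, inner_sub_left, inner_sub_left, real_inner_smul_left,
      real_inner_self_eq_norm_sq]
    have hFx := (real_inner_le_norm (F (x t, v t)) (x t - xg)).trans
      (mul_le_mul_of_nonneg_left (hR t ht).1 (norm_nonneg _))
    have hvx := (neg_le_abs _).trans ((abs_real_inner_le_norm (v t) (x t - xg)).trans
      (mul_le_mul_of_nonneg_left (hR t ht).1 (norm_nonneg _)))
    nlinarith [huberU_le_inner_gradHuberU (kv := kv) (dxmax := dxmax) (xg := xg) (p := x t) hkp]
  have hlim : Tendsto (fun t => ‖v t‖ ^ 2 + ‖F (x t, v t)‖ * R + kv * (‖v t‖ * R)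
      - HuberU kp kv dxmax xg (x t)) atTop (𝓝 (-L)) := by
    have hvn := hv.norm
    have hFn := hF.norm
    rw [norm_zero] at hvn hFn
    simpa using ((hvn.pow 2).add (hFn.mul_const R) |>.add
      ((hvn.mul_const R).const_mul kv)).sub hU
  have hWbot : Tendsto W atTop atBot := tendsto_atBot_of_hasDerivAt_le_neg (half_pos hL) <| by
    filter_upwards [eventually_ge_atTop 0, hlim.eventually_lt_const (by linarith : -L < -(L / 2))]
      with t ht hlt
    exact ⟨hW t ht, (hW' t ht).trans hlt.le⟩
  obtain ⟨t, ht, hWt⟩ :=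
    ((eventually_ge_atTop 0).and (hWbot.eventually_lt_atBot (-(R * R)))).exists
  have := (neg_abs_le _).trans' (neg_le_neg ((abs_real_inner_le_norm (v t) (x t - xg)).trans
    (mul_le_mul (hR t ht).2 (hR t ht).1 (norm_nonneg _) ((norm_nonneg _).trans (hR t ht).2))))
  linarith

end IsSteeringSolution

/-- Theorem 3 of the paper: for a locally Lipschitz circular-field
state feedback `F(p, w)` perpendicular to the velocity (`F(p,w)·w = 0`) and vanishing at
zero velocity (`F(p,0) = 0`), every solution of the combined steering dynamics
`ẍ = F(x, ẋ) − ∇U(x) − kv·ẋ` converges to the goal: `x(t) → xg` and `ẋ(t) → 0`. -/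
theorem goal_convergence_combined_dynamics
    (kp kv dxmax : ℝ) (hkp : 0 < kp) (hkv : 0 < kv) (hdxmax : 0 < dxmax)
    (xg : EuclideanSpace ℝ (Fin 3))
    (F : EuclideanSpace ℝ (Fin 3) × EuclideanSpace ℝ (Fin 3) → EuclideanSpace ℝ (Fin 3))
    (hFlip : LocallyLipschitz F)
    (hFperp : ∀ p w : EuclideanSpace ℝ (Fin 3), ⟪F (p, w), w⟫ = 0)
    (hF0 : ∀ p : EuclideanSpace ℝ (Fin 3), F (p, 0) = 0)
    (x v a : ℝ → EuclideanSpace ℝ (Fin 3))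
    (hx : ∀ t, 0 ≤ t → HasDerivAt x (v t) t)
    (hv : ∀ t, 0 ≤ t → HasDerivAt v (a t) t)
    (hacc : ∀ t, 0 ≤ t →
      a t = F (x t, v t) - gradHuberU kp kv dxmax xg (x t) - kv • v t) :
    Tendsto x atTop (nhds xg) ∧ Tendsto v atTop (nhds 0) := by
  have hs : IsSteeringSolution kp kv dxmax xg F x v a := ⟨hx, hv, hacc⟩
  have hK : 0 < kv * dxmax := mul_pos hkv hdxmax
  obtain ⟨L, hE⟩ := hs.tendsto_steeringEnergy hkp hkv hK hFperp
  obtain ⟨R, hR⟩ := hs.exists_bound hkp hkv hK hFperp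
  have hv0 := hs.tendsto_vel_zero hkp hkv hK hFperp hFlip.continuous hE hR
  have hU : Tendsto (fun t => HuberU kp kv dxmax xg (x t)) atTop (𝓝 L) := by
    simpa [steeringEnergy] using hE.sub ((hv0.norm.pow 2).div_const 2)
  have hF : Tendsto (fun t => F (x t, v t)) atTop (𝓝 0) :=
    tendsto_apply_prod_of_isCompact hFlip.continuous (isCompact_closedBall xg R)
      (fun p _ => hF0 p)
      (eventually_atTop.2 ⟨0, fun t ht => mem_closedBall_iff_norm.2 (hR t ht).1⟩) hv0
  have hL := hs.eq_zero_of_tendsto_huberU hkp hkv hK.le hR hv0 hF hU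
  exact ⟨tendsto_of_tendsto_huberU hkp hK (hL ▸ hU), hv0⟩
end
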